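/- arXiv:1501.05250 — 3 statements merged into one kernel-verified Lean document; each statement's English description precedes it below -/
import Mathlib

section
/- Let m, n ≥ 1 be integers, A ⊆ {0,1,…,m−1}, and B ⊆ {1,…,n−1}. Let w = (w_1,…,w_{m+n}) be any sequence of integers, and set u := (w_1,…,w_m) and v := (w_{m+1},…,w_{m+n}). Then Des^B(u) = A and Des(v) = B if and only if either Des^B(w) = A ∪ {m+j : j ∈ B} or Des^B(w) = A ∪ {m} ∪ {m+j : j ∈ B}; moreover these two alternatives are mutually exclusive. (This expresses, on the level of coefficients of words, the product formula s^B_α·s_β = s^B_{α·β} + s^B_{α▷β}, realizing the type B noncommutative symmetric function module NSym^B inside formal series in noncommutative variables.) -/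
/-- The descent set of the word `a₁, …, a_p` (where `a i` denotes `a_i` for `1 ≤ i ≤ p`):
`Des(a) = {i ∈ {1,…,p−1} : a_i > a_{i+1}}`. -/
def wordDes (p : ℕ) (a : ℕ → ℤ) : Set ℕ := {i | 1 ≤ i ∧ i ≤ p - 1 ∧ a (i + 1) < a i}

/-- The type B descent set of a word: `Des^B(a) = Des(a) ∪ {0 : if a₁ < 0}`. -/
def wordDesB (p : ℕ) (a : ℕ → ℤ) : Set ℕ := wordDes p a ∪ {i | i = 0 ∧ a 1 < 0}

/-- Decomposition of the type B descent set of a concatenation. -/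
lemma wordDesB_decomp (m n : ℕ) (hm : 1 ≤ m) (hn : 1 ≤ n) (w : ℕ → ℤ) :
    wordDesB (m + n) w =
      wordDesB m w ∪ {i | i = m ∧ w (m + 1) < w m} ∪
        (fun j => m + j) '' wordDes n (fun j => w (m + j)) := by
  ext i
  simp only [wordDesB, wordDes, Set.mem_union, Set.mem_setOf_eq, Set.mem_image]
  constructor
  · rintro (⟨h1, h2, h3⟩ | h0)
    · rcases lt_trichotomy i m with h | h | h
      · exact Or.inl (Or.inl (Or.inl ⟨h1, by omega, h3⟩))
      · subst h
        exact Or.inl (Or.inr ⟨rfl, h3⟩)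
      · refine Or.inr ⟨i - m, ⟨by omega, by omega, ?_⟩, by omega⟩
        have e1 : m + (i - m + 1) = i + 1 := by omega
        have e2 : m + (i - m) = i := by omega
        rw [e1, e2]; exact h3
    · exact Or.inl (Or.inl (Or.inr h0))
  · rintro (((⟨h1, h2, h3⟩ | h0) | ⟨hi, hw⟩) | ⟨j, ⟨hj1, hj2, hj3⟩, hji⟩)
    · exact Or.inl ⟨h1, by omega, h3⟩
    · exact Or.inr h0
    · subst hi
      exact Or.inl ⟨hm, by omega, hw⟩
    · have hji' : m + j = i := hji
      subst hji'
      refine Or.inl ⟨by omega, by omega, ?_⟩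
      exact hj3
  
/-- Splitting an equality of unions whose pieces live in disjoint ranges. -/
lemma split_union (m n : ℕ) (_hm : 1 ≤ m) (D1 A : Set ℕ) (C M : Set ℕ) (D2 B : Set ℕ)
    (hD1 : D1 ⊆ {i | i < m}) (hA : A ⊆ {i | i < m})
    (hC : C ⊆ {m}) (hM : M ⊆ {m})
    (hD2 : D2 ⊆ Set.Icc 1 (n - 1)) (hB : B ⊆ Set.Icc 1 (n - 1))
    (h : D1 ∪ M ∪ (fun j => m + j) '' D2 = A ∪ C ∪ (fun j => m + j) '' B) :
    D1 = A ∧ D2 = B := by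
  rw [Set.ext_iff] at h
  constructor
  · ext i
    have hi := h i
    simp only [Set.mem_union, Set.mem_image] at hi
    constructor
    · intro hiD
      have hilt : i < m := hD1 hiD
      rcases hi.mp (Or.inl (Or.inl hiD)) with (hA' | hC') | ⟨j, hj, hji⟩
      · exact hA'
      · have := hC hC'; simp only [Set.mem_singleton_iff] at this; omega
      · have := (hB hj).1; omega
    · intro hiA
      have hilt : i < m := hA hiA
      rcases hi.mpr (Or.inl (Or.inl hiA)) with (hD' | hM') | ⟨j, hj, hji⟩
      · exact hD'
      · have := hM hM'; simp only [Set.mem_singleton_iff] at this; omega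
      · have := (hD2 hj).1; omega
  · ext j
    have hj := h (m + j)
    simp only [Set.mem_union, Set.mem_image] at hj
    constructor
    · intro hjD
      have hj1 : 1 ≤ j := (hD2 hjD).1
      rcases hj.mp (Or.inr ⟨j, hjD, rfl⟩) with (hA' | hC') | ⟨j', hj', hji⟩
      · have := hA hA'; simp only [Set.mem_setOf_eq] at this; omega
      · have := hC hC'; simp only [Set.mem_singleton_iff] at this; omega
      · have : j' = j := by omega
        rwa [← this]
    · intro hjB
      have hj1 : 1 ≤ j := (hB hjB).1
      rcases hj.mpr (Or.inr ⟨j, hjB, rfl⟩) with (hD' | hM') | ⟨j', hj', hji⟩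
      · have := hD1 hD'; simp only [Set.mem_setOf_eq] at this; omega
      · have := hM hM'; simp only [Set.mem_singleton_iff] at this; omega
      · have : j' = j := by omega
        rwa [← this]

/-- type B descents of a concatenated word.  For `w = (w₁,…,w_{m+n})`, with
`u = (w₁,…,w_m)` and `v = (w_{m+1},…,w_{m+n})`: `Des^B(u) = A` and `Des(v) = B` iff
`Des^B(w)` is one of `A ∪ (m + B)` or `A ∪ {m} ∪ (m + B)`, and these two alternatives
are mutually exclusive. -/
theorem stmt7 (m n : ℕ) (hm : 1 ≤ m) (hn : 1 ≤ n) (A B : Set ℕ)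
    (hA : A ⊆ Set.Iic (m - 1)) (hB : B ⊆ Set.Icc 1 (n - 1)) (w : ℕ → ℤ) :
    ((wordDesB m w = A ∧ wordDes n (fun j => w (m + j)) = B) ↔
      (wordDesB (m + n) w = A ∪ (fun j => m + j) '' B ∨
        wordDesB (m + n) w = A ∪ {m} ∪ (fun j => m + j) '' B)) ∧
    ¬(wordDesB (m + n) w = A ∪ (fun j => m + j) '' B ∧
        wordDesB (m + n) w = A ∪ {m} ∪ (fun j => m + j) '' B) := by
  have hAlt : A ⊆ {i | i < m} := fun i hi => by
    have := hA hi; simp only [Set.mem_Iic] at this; simp only [Set.mem_setOf_eq]; omega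
  have hD1lt : wordDesB m w ⊆ {i | i < m} := by
    rintro i (⟨h1, h2, h3⟩ | ⟨h0, _⟩)
    · simp only [Set.mem_setOf_eq]; omega
    · simp only [Set.mem_setOf_eq]; omega
  have hD2sub : wordDes n (fun j => w (m + j)) ⊆ Set.Icc 1 (n - 1) := by
    rintro j ⟨h1, h2, _⟩; exact ⟨h1, h2⟩
  have hmnotA : m ∉ A ∪ (fun j => m + j) '' B := by
    rintro (h | ⟨j, hj, hji⟩)
    · have := hA h; simp only [Set.mem_Iic] at this; omega
    · have := (hB hj).1
      have hji' : m + j = m := hji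
      omega
  constructor
  · constructor
    · rintro ⟨h1, h2⟩
      rw [wordDesB_decomp m n hm hn w, h1, h2]
      by_cases hc : w (m + 1) < w m
      · right
        have : {i | i = m ∧ w (m + 1) < w m} = ({m} : Set ℕ) := by
          ext i; simp [hc]
        rw [this]
      · left
        have : {i | i = m ∧ w (m + 1) < w m} = (∅ : Set ℕ) := by
          ext i; simp [hc]
        rw [this, Set.union_empty]
    · intro h
      rw [wordDesB_decomp m n hm hn w] at h
      rcases h with h | h
      · rw [show A ∪ (fun j => m + j) '' B = A ∪ (∅ : Set ℕ) ∪ (fun j => m + j) '' B by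
          rw [Set.union_empty]] at h
        exact split_union m n hm _ A _ _ _ B hD1lt hAlt (by simp) (by
          rintro i ⟨hi, _⟩; simp [hi]) hD2sub hB h
      · exact split_union m n hm _ A _ _ _ B hD1lt hAlt (le_refl _) (by
          rintro i ⟨hi, _⟩; simp [hi]) hD2sub hB h
  · rintro ⟨h1, h2⟩
    apply hmnotA
    rw [← h1, h2]
    exact Or.inl (Or.inr rfl)
end

section
/- Let m ≥ 2 and n ≥ 1 be integers, A ⊆ {0,1,…,m−1}, and B ⊆ {1,…,n−1}. Let w = (w_1,…,w_{m+n}) be any sequence of integers, and set u := (w_1,…,w_m) and v := (w_{m+1},…,w_{m+n}). Then Des^D(u) = A and Des(v) = B if and only if either Des^D(w) = A ∪ {m+j : j ∈ B} or Des^D(w) = A ∪ {m} ∪ {m+j : j ∈ B}; moreover these two alternatives are mutually exclusive. (This expresses, on the level of coefficients of words, the product formula s^D_α·s_β = s^D_{α·β} + s^D_{α▷β}, realizing the type D noncommutative symmetric function module NSym^D inside formal series in noncommutative variables.) -/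
/-- The type D descent set of a word: `Des^D(a) = Des(a) ∪ {0 : if a₁ + a₂ < 0}`. -/
def wordDesD (p : ℕ) (a : ℕ → ℤ) : Set ℕ := wordDes p a ∪ {i | i = 0 ∧ a 1 + a 2 < 0}

lemma memDesD (p : ℕ) (a : ℕ → ℤ) (i : ℕ) :
    i ∈ wordDesD p a ↔ (1 ≤ i ∧ i ≤ p - 1 ∧ a (i + 1) < a i) ∨ (i = 0 ∧ a 1 + a 2 < 0) :=
  Iff.rfl

lemma memDes (p : ℕ) (a : ℕ → ℤ) (i : ℕ) :
    i ∈ wordDes p a ↔ (1 ≤ i ∧ i ≤ p - 1 ∧ a (i + 1) < a i) := Iff.rfl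

/-- type D descents of a concatenated word.  For `w = (w₁,…,w_{m+n})` with
`m ≥ 2`, with `u = (w₁,…,w_m)` and `v = (w_{m+1},…,w_{m+n})`: `Des^D(u) = A` and
`Des(v) = B` iff `Des^D(w)` is one of `A ∪ (m + B)` or `A ∪ {m} ∪ (m + B)`, and these
two alternatives are mutually exclusive. -/
theorem stmt8 (m n : ℕ) (hm : 2 ≤ m) (hn : 1 ≤ n) (A B : Set ℕ)
    (hA : A ⊆ Set.Iic (m - 1)) (hB : B ⊆ Set.Icc 1 (n - 1)) (w : ℕ → ℤ) :
    ((wordDesD m w = A ∧ wordDes n (fun j => w (m + j)) = B) ↔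
      (wordDesD (m + n) w = A ∪ (fun j => m + j) '' B ∨
        wordDesD (m + n) w = A ∪ {m} ∪ (fun j => m + j) '' B)) ∧
    ¬(wordDesD (m + n) w = A ∪ (fun j => m + j) '' B ∧
        wordDesD (m + n) w = A ∪ {m} ∪ (fun j => m + j) '' B) := by
  set v : ℕ → ℤ := fun j => w (m + j) with hv
  -- key decomposition of the descent set of the concatenation
  have key : ∀ i, i ∈ wordDesD (m + n) w ↔
      (i ∈ wordDesD m w ∨ (i = m ∧ w (m + 1) < w m) ∨ ∃ j ∈ wordDes n v, i = m + j) := by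
    intro i
    rw [memDesD, memDesD]
    constructor
    · rintro (⟨h1, h2, h3⟩ | h0)
      · rcases lt_trichotomy i m with h | h | h
        · exact Or.inl (Or.inl ⟨h1, by omega, h3⟩)
        · subst h; exact Or.inr (Or.inl ⟨rfl, h3⟩)
        · refine Or.inr (Or.inr ⟨i - m, ?_, by omega⟩)
          rw [memDes]
          refine ⟨by omega, by omega, ?_⟩
          simp only [hv]
          have e1 : m + (i - m + 1) = i + 1 := by omega
          have e2 : m + (i - m) = i := by omega
          rw [e1, e2]
          exact h3
      · exact Or.inl (Or.inr h0)
    · rintro ((⟨h1, h2, h3⟩ | h0) | ⟨rfl, h⟩ | ⟨j, hj, rfl⟩)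
      · exact Or.inl ⟨h1, by omega, h3⟩
      · exact Or.inr h0
      · exact Or.inl ⟨by omega, by omega, h⟩
      · rw [memDes] at hj
        obtain ⟨hj1, hj2, hj3⟩ := hj
        exact Or.inl ⟨by omega, by omega, hj3⟩
  have hboundD : ∀ i, i ∈ wordDesD m w → i ≤ m - 1 := by
    rintro i (⟨h1, h2, _⟩ | ⟨rfl, _⟩) <;> omega
  have hAle : ∀ i ∈ A, i ≤ m - 1 := fun i hi => hA hi
  have hBle : ∀ j ∈ B, 1 ≤ j ∧ j ≤ n - 1 := fun j hj => hB hj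
  have hmB : ∀ i, i ∈ (fun j => m + j) '' B → m + 1 ≤ i := by
    rintro i ⟨j, hj, rfl⟩
    have := hBle j hj
    show m + 1 ≤ m + j
    omega
  -- the generic backward direction
  have main : ∀ S : Set ℕ, S ⊆ {m} →
      wordDesD (m + n) w = A ∪ S ∪ (fun j => m + j) '' B →
      wordDesD m w = A ∧ wordDes n v = B := by
    intro S hS hw
    constructor
    · ext i
      constructor
      · intro hi
        have hle := hboundD i hi
        have : i ∈ A ∪ S ∪ (fun j => m + j) '' B := by
          rw [← hw, key]; exact Or.inl hi
        rcases this with (hiA | hiS) | hiB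
        · exact hiA
        · have := hS hiS; simp only [Set.mem_singleton_iff] at this; omega
        · have := hmB i hiB; omega
      · intro hi
        have hle := hAle i hi
        have : i ∈ wordDesD (m + n) w := by
          rw [hw]; exact Or.inl (Or.inl hi)
        rw [key] at this
        rcases this with h | ⟨rfl, _⟩ | ⟨j, hj, rfl⟩
        · exact h
        · omega
        · rw [memDes] at hj; omega
    · ext j
      constructor
      · intro hj
        have hj' := hj
        rw [memDes] at hj'
        have : m + j ∈ A ∪ S ∪ (fun j => m + j) '' B := by
          rw [← hw, key]; exact Or.inr (Or.inr ⟨j, hj, rfl⟩)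
        rcases this with (hiA | hiS) | ⟨b, hb, hbe⟩
        · have := hAle _ hiA; omega
        · have := hS hiS; simp only [Set.mem_singleton_iff] at this; omega
        · simp only at hbe
          have : b = j := by omega
          rwa [← this]
      · intro hj
        have hjb := hBle j hj
        have : m + j ∈ wordDesD (m + n) w := by
          rw [hw]; exact Or.inr ⟨j, hj, rfl⟩
        rw [key] at this
        rcases this with h | ⟨he, _⟩ | ⟨j', hj', he⟩
        · have := hboundD _ h; omega
        · omega
        · have : j' = j := by omega
          rwa [this] at hj'
  constructor
  · constructor
    · rintro ⟨hU, hV⟩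
      by_cases hd : w (m + 1) < w m
      · right
        ext i
        rw [key, hU, hV]
        simp only [Set.mem_union, Set.mem_image, Set.mem_singleton_iff]
        constructor
        · rintro (h | ⟨rfl, _⟩ | ⟨j, hj, rfl⟩)
          · exact Or.inl (Or.inl h)
          · exact Or.inl (Or.inr rfl)
          · exact Or.inr ⟨j, hj, rfl⟩
        · rintro ((h | rfl) | ⟨j, hj, rfl⟩)
          · exact Or.inl h
          · exact Or.inr (Or.inl ⟨rfl, hd⟩)
          · exact Or.inr (Or.inr ⟨j, hj, rfl⟩)
      · left
        ext i
        rw [key, hU, hV]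
        simp only [Set.mem_union, Set.mem_image]
        constructor
        · rintro (h | ⟨rfl, h⟩ | ⟨j, hj, rfl⟩)
          · exact Or.inl h
          · exact absurd h hd
          · exact Or.inr ⟨j, hj, rfl⟩
        · rintro (h | ⟨j, hj, rfl⟩)
          · exact Or.inl h
          · exact Or.inr (Or.inr ⟨j, hj, rfl⟩)
    · rintro (hw | hw)
      · exact main ∅ (Set.empty_subset _) (by rw [hw, Set.union_empty])
      · exact main {m} subset_rfl hw
  · rintro ⟨h1, h2⟩
    rw [h1] at h2
    have : m ∈ A ∪ (fun j => m + j) '' B := by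
      rw [h2]; exact Or.inl (Or.inr rfl)
    rcases this with hiA | hiB
    · have := hAle _ hiA; omega
    · have := hmB _ hiB; omega
end

section
/- Let F be a field, n ≥ 1, and C ⊆ {1,…,n−1}. Let w ∈ S_n with Des(w) ⊆ C, and let (i_1,…,i_k) be any reduced word for w. Then π̄_{(i_1,…,i_k)}(x_C) = w·x_C + Σ_d c_d·x^d, where the sum ranges over exponent vectors d ∈ ℕ^n with x^d ≺ x_C and the c_d lie in F; equivalently, every monomial x^d occurring with nonzero coefficient in π̄_{(i_1,…,i_k)}(x_C) − w·x_C satisfies λ(d) <_lex λ(e_C), where e_C is the exponent vector of x_C. -/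
open MvPolynomial

/-- The adjacent transposition `s_i = (i, i+1)` (one-based labelling of positions) as a
permutation of `Fin n` (zero-based); it is the identity if `i` is out of range. -/
def sswap (n : ℕ) (i : ℕ) : Equiv.Perm (Fin n) :=
  if h : 1 ≤ i ∧ i < n then Equiv.swap ⟨i - 1, by omega⟩ ⟨i, h.2⟩ else 1

/-- The number of inversions `inv(w) = #{(i,j) : i < j, w(i) > w(j)}`. -/
def invNum {n : ℕ} (w : Equiv.Perm (Fin n)) : ℕ :=
  (Finset.univ.filter (fun p : Fin n × Fin n => p.1 < p.2 ∧ w p.2 < w p.1)).card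

/-- The value `w(i)` of a permutation at the one-based position `i`, as a natural number
(zero-based); junk value `0` if out of range. -/
def valAt (n : ℕ) (w : Equiv.Perm (Fin n)) (i : ℕ) : ℕ :=
  if h : i - 1 < n then (w ⟨i - 1, h⟩ : Fin n) else 0

/-- The descent set `Des(w) = {i ∈ {1,…,n−1} : w(i) > w(i+1)}` (one-based). -/
def permDes (n : ℕ) (w : Equiv.Perm (Fin n)) : Finset ℕ :=
  (Finset.Icc 1 (n - 1)).filter (fun i => valAt n w (i + 1) < valAt n w i)

/-- The monomial `x_C = ∏_{i ∈ C} x₁x₂⋯x_i` (with one-based variables `x₁,…,x_n`). -/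
noncomputable def xC (F : Type*) [Field F] (n : ℕ) (C : Finset ℕ) :
    MvPolynomial (Fin n) F :=
  ∏ i ∈ C, ∏ j ∈ Finset.range i, (if h : j < n then X (⟨j, h⟩ : Fin n) else 1)

/-- `λ(d)`: the list of the nonzero entries of the exponent vector `d`, sorted in
decreasing order (the partition associated with `d`). -/
def lam {n : ℕ} (d : Fin n →₀ ℕ) : List ℕ :=
  ((Multiset.filter (fun x => x ≠ 0)
    (Finset.univ.val.map fun t : Fin n => d t)).sort (· ≤ ·)).reverse

/-!
`x_C` is the monomial `x^{e_C}` with `e_C(t) = #{c ∈ C | t < c}`. For a monomial `x^d` with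
`d_{i+1} < d_i`, telescoping gives `π̄_i x^d = s_i x^d + ∑ x^{d'}`, where `d'` agrees with `d`
except that its entries at `i, i+1` lie strictly between `d_{i+1}` and `d_i`; so `λ(d') < λ(d)`.
If `d_i = d_{i+1}` then `π̄_i x^d = 0`, and `π̄_i ∘ s_i = -π̄_i`, so `π̄_i` never raises `λ`.

Induct along the reduced word, keeping `π̄ x^{e_C} = u·x^{e_C} + (lower terms)` for each suffix `u`.
Prepending `s_i` adds one inversion `(z, t)`, which is also an inversion of `w`; so `w` has a
descent in `[z, t)`, which lies in `C` and forces `e_C(t) < e_C(z)`. Hence `u·e_C` is larger at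
`i` than at `i+1`, and `π̄_i(u·x^{e_C}) = s_i u·x^{e_C} + (lower terms)`.
-/

namespace Multiset

theorem sort_ge_eq_cons {N : Multiset ℕ} {m : ℕ} (hm : m ∈ N) (hmax : ∀ x ∈ N, x ≤ m) :
    N.sort (· ≥ ·) = m :: (N.erase m).sort (· ≥ ·) := by
  conv_lhs => rw [← cons_erase hm]
  exact sort_cons _ _ _ fun x hx => hmax x (mem_of_mem_erase hx)

theorem sort_ge_lt_cons {N : Multiset ℕ} {m : ℕ} (h : ∀ x ∈ N, x < m) (l : List ℕ) :
    N.sort (· ≥ ·) < m :: l := by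
  have hmem : ∀ x ∈ N.sort (· ≥ ·), x < m := fun x hx => h x ((mem_sort _).1 hx)
  match N.sort (· ≥ ·), hmem with
  | [], _ => exact List.Lex.nil
  | x :: _, hx => exact List.Lex.rel (hx x List.mem_cons_self)

theorem sort_ge_add_lt_sort_ge_add (M : Multiset ℕ) {A B : Multiset ℕ} {p : ℕ}
    (hA : ∀ x ∈ A, x < p) (hB : p ∈ B) :
    (M + A).sort (· ≥ ·) < (M + B).sort (· ≥ ·) := by
  induction M using strongInductionOn with
  | ih M ih =>
  obtain ⟨m, hm, hmax⟩ := (M + B).toFinset.exists_max_image id ⟨p, by simp [hB]⟩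
  simp only [mem_toFinset, id] at hm hmax
  have hpm : p ≤ m := hmax p (mem_add.2 (Or.inr hB))
  rw [sort_ge_eq_cons hm hmax]
  by_cases hmM : m ∈ M
  · have hmaxA : ∀ x ∈ M + A, x ≤ m := by
      simp only [mem_add]
      rintro x (hx | hx)
      exacts [hmax x (mem_add.2 (Or.inl hx)), ((hA x hx).trans_le hpm).le]
    rw [sort_ge_eq_cons (mem_add.2 (Or.inl hmM)) hmaxA, erase_add_left_pos _ hmM,
      erase_add_left_pos _ hmM]
    exact List.Lex.cons (ih _ (erase_lt.2 hmM))
  · apply sort_ge_lt_cons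
    simp only [mem_add]
    rintro x (hx | hx)
    · exact (hmax x (mem_add.2 (Or.inl hx))).lt_of_ne fun h => hmM (h ▸ hx)
    · exact (hA x hx).trans_le hpm

end Multiset

section Inversions
variable {α : Type*} [LinearOrder α] {a b : α}

theorem swap_lt_swap_iff_of_covBy (hab : a ⋖ b) {x y : α} (hxy : ¬(x = a ∧ y = b))
    (hyx : ¬(x = b ∧ y = a)) : Equiv.swap a b x < Equiv.swap a b y ↔ x < y := by
  have hlt : ∀ z, z ≠ a → (z < a ↔ z < b) := fun z hz =>
    ⟨fun h => h.trans hab.lt, fun h => (hab.le_of_lt h).lt_of_ne hz⟩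
  have hgt : ∀ z, z ≠ b → (a < z ↔ b < z) := fun z hz =>
    ⟨fun h => (hab.ge_of_gt h).lt_of_ne' hz, fun h => hab.lt.trans h⟩
  have hne := hab.lt.ne
  by_cases hxa : x = a <;> by_cases hxb : x = b <;> by_cases hya : y = a <;>
    by_cases hyb : y = b <;> simp_all [Equiv.swap_apply_of_ne_of_ne]

variable [Fintype α]

def inversions (u : Equiv.Perm α) : Finset (α × α) :=
  Finset.univ.filter fun p => p.1 < p.2 ∧ u p.2 < u p.1

theorem mem_inversions {u : Equiv.Perm α} {p : α × α} :
    p ∈ inversions u ↔ p.1 < p.2 ∧ u p.2 < u p.1 := by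
  simp [inversions]

theorem inversions_swap_mul_subset (hab : a ⋖ b) (u : Equiv.Perm α) :
    inversions (Equiv.swap a b * u) ⊆ insert (u.symm a, u.symm b) (inversions u) := by
  rintro ⟨z, t⟩ h
  obtain ⟨hzt, hu⟩ := mem_inversions.1 h
  simp only [Equiv.Perm.mul_apply] at hzt hu
  rw [Finset.mem_insert, mem_inversions, Prod.mk.injEq]
  by_cases hab' : u z = a ∧ u t = b
  · exact Or.inl ⟨by rw [← hab'.1, Equiv.symm_apply_apply],
      by rw [← hab'.2, Equiv.symm_apply_apply]⟩
  by_cases hba : u z = b ∧ u t = a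
  · rw [hba.1, hba.2, Equiv.swap_apply_left, Equiv.swap_apply_right] at hu
    exact absurd hab.lt hu.not_gt
  exact Or.inr ⟨hzt, (swap_lt_swap_iff_of_covBy hab (fun h => hba ⟨h.2, h.1⟩)
    (fun h => hab' ⟨h.2, h.1⟩)).1 hu⟩

theorem card_inversions_swap_mul_le (hab : a ⋖ b) (u : Equiv.Perm α) :
    (inversions (Equiv.swap a b * u)).card ≤ (inversions u).card + 1 :=
  (Finset.card_le_card (inversions_swap_mul_subset hab u)).trans (Finset.card_insert_le _ _)

theorem lt_and_inversions_subset_of_card_inversions_swap_mul (hab : a ⋖ b) (u : Equiv.Perm α)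
    (h : (inversions (Equiv.swap a b * u)).card = (inversions u).card + 1) :
    u.symm a < u.symm b ∧ inversions u ⊆ inversions (Equiv.swap a b * u) := by
  have hsub := inversions_swap_mul_subset hab u
  have hnew : (u.symm a, u.symm b) ∉ inversions u := fun hmem => by
    have := Finset.card_le_card hsub
    rw [Finset.insert_eq_of_mem hmem] at this
    omega
  have heq := Finset.eq_of_subset_of_card_le hsub (by rw [Finset.card_insert_of_notMem hnew, h])
  exact ⟨(mem_inversions.1 (heq ▸ Finset.mem_insert_self _ _)).1, heq ▸ Finset.subset_insert _ _⟩

end Inversions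

section Words
variable {n : ℕ}

theorem invNum_eq_card_inversions (u : Equiv.Perm (Fin n)) : invNum u = (inversions u).card :=
  rfl

theorem sswap_eq_swap {i : ℕ} (hi : 1 ≤ i) (hin : i < n) :
    sswap n i = Equiv.swap ⟨i - 1, by omega⟩ ⟨i, hin⟩ :=
  dif_pos ⟨hi, hin⟩

theorem mk_sub_one_covBy_mk {i : ℕ} (hi : 1 ≤ i) (hin : i < n) :
    (⟨i - 1, by omega⟩ : Fin n) ⋖ ⟨i, hin⟩ :=
  Fin.covBy_iff.2 (Nat.covBy_iff_add_one_eq.2 (by simp; omega))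

theorem invNum_sswap_mul_le (i : ℕ) (u : Equiv.Perm (Fin n)) :
    invNum (sswap n i * u) ≤ invNum u + 1 := by
  unfold sswap
  split_ifs with h
  · exact card_inversions_swap_mul_le (mk_sub_one_covBy_mk h.1 h.2) u
  · rw [one_mul]; omega

theorem invNum_prod_le_length (r : List ℕ) : invNum (r.map (sswap n)).prod ≤ r.length := by
  induction r with
  | nil =>
    refine (Finset.card_eq_zero.2 (Finset.eq_empty_of_forall_notMem fun p hp => ?_)).le
    obtain ⟨h₁, h₂⟩ := mem_inversions.1 hp
    exact h₁.not_gt h₂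
  | cons i r ih =>
    rw [List.map_cons, List.prod_cons, List.length_cons]
    exact (invNum_sswap_mul_le i _).trans (by omega)

end Words

section Exponents
variable {σ : Type*} [DecidableEq σ]

noncomputable def setPair (d : σ →₀ ℕ) (a b : σ) (p q : ℕ) : σ →₀ ℕ :=
  (d.update a p).update b q

variable {a b : σ} (d : σ →₀ ℕ) (p q : ℕ)

theorem setPair_apply (t : σ) :
    setPair d a b p q t = if t = b then q else if t = a then p else d t := by
  simp only [setPair, Finsupp.coe_update, Function.update_apply]

theorem setPair_self : setPair d a b (d a) (d b) = d := by
  ext t; rw [setPair_apply]; split_ifs with h₁ h₂ <;> simp [*]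

theorem single_left_add_setPair (hab : a ≠ b) :
    Finsupp.single a 1 + setPair d a b p q = setPair d a b (p + 1) q := by
  ext t
  simp only [Finsupp.add_apply, Finsupp.single_apply, setPair_apply]
  rcases eq_or_ne t b with rfl | htb
  · simp [hab, add_comm]
  rcases eq_or_ne t a with rfl | hta
  · simp [htb, add_comm]
  · simp [htb, hta, Ne.symm hta]

theorem single_right_add_setPair (hab : a ≠ b) :
    Finsupp.single b 1 + setPair d a b p q = setPair d a b p (q + 1) := by
  ext t
  simp only [Finsupp.add_apply, Finsupp.single_apply, setPair_apply]
  rcases eq_or_ne t b with rfl | htb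
  · simp [add_comm]
  rcases eq_or_ne t a with rfl | hta
  · simp [htb, Ne.symm htb]
  · simp [htb, hta, Ne.symm htb]

theorem mapDomain_swap_setPair (hab : a ≠ b) :
    Finsupp.mapDomain (Equiv.swap a b) (setPair d a b p q) = setPair d a b q p := by
  ext t
  rw [Finsupp.mapDomain_equiv_apply, Equiv.symm_swap, setPair_apply, setPair_apply]
  by_cases hta : t = a <;> by_cases htb : t = b <;>
    simp_all [Equiv.swap_apply_of_ne_of_ne, Ne.symm hab]

theorem mapDomain_swap_eq_setPair (hab : a ≠ b) :
    Finsupp.mapDomain (Equiv.swap a b) d = setPair d a b (d b) (d a) := by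
  conv_lhs => rw [← setPair_self d (a := a) (b := b)]
  exact mapDomain_swap_setPair d _ _ hab

end Exponents

section Partitions
variable {n : ℕ}

def parts (d : Fin n →₀ ℕ) : Multiset ℕ :=
  (Finset.univ.val.map d).filter (· ≠ 0)

theorem lam_eq_sort_parts (d : Fin n →₀ ℕ) : lam d = (parts d).sort (· ≥ ·) := by
  refine List.Perm.eq_of_pairwise' (r := (· ≥ ·)) ?_ (Multiset.pairwise_sort _ _) ?_
  · exact List.pairwise_reverse.2 (Multiset.pairwise_sort _ _)
  · rw [← Multiset.coe_eq_coe, lam, Multiset.coe_reverse, Multiset.sort_eq, Multiset.sort_eq]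
    rfl

theorem lam_mapDomain_equiv (u : Equiv.Perm (Fin n)) (d : Fin n →₀ ℕ) :
    lam (Finsupp.mapDomain u d) = lam d := by
  have hmap : Finset.univ.val.map (Finsupp.mapDomain u d) = Finset.univ.val.map d := by
    simp_rw [Finsupp.mapDomain_equiv_apply]
    calc _ = (Finset.univ.val.map u.symm).map d := (Multiset.map_map _ _ _).symm
      _ = _ := by rw [Multiset.map_univ_val_equiv]
  rw [lam_eq_sort_parts, lam_eq_sort_parts, parts, parts, hmap]

variable {a b : Fin n}

theorem parts_setPair (hab : a ≠ b) (d : Fin n →₀ ℕ) (p q : ℕ) :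
    parts (setPair d a b p q) =
      (((Finset.univ.erase a).erase b).val.map d).filter (· ≠ 0) +
        ({p, q} : Multiset ℕ).filter (· ≠ 0) := by
  have huniv : (Finset.univ : Finset (Fin n)).val =
      a ::ₘ b ::ₘ ((Finset.univ.erase a).erase b).val := by
    rw [Finset.erase_val, Finset.erase_val, Multiset.cons_erase
      ((Multiset.mem_erase_of_ne hab.symm).2 (Finset.mem_univ_val b)),
      Multiset.cons_erase (Finset.mem_univ_val a)]
  have hrest : ((Finset.univ.erase a).erase b).val.map (setPair d a b p q) =
      ((Finset.univ.erase a).erase b).val.map d := by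
    refine Multiset.map_congr rfl fun t ht => ?_
    simp only [Finset.mem_val, Finset.mem_erase] at ht
    simp [setPair_apply, ht.1, ht.2.1]
  rw [parts, huniv, Multiset.map_cons, Multiset.map_cons, hrest, setPair_apply, setPair_apply,
    if_neg hab, if_pos rfl, if_pos rfl, add_comm, ← Multiset.filter_add]
  rfl

theorem lam_setPair_lt (hab : a ≠ b) (d : Fin n →₀ ℕ) {p x y : ℕ} (hx : x < p) (hy : y < p)
    (q : ℕ) : lam (setPair d a b x y) < lam (setPair d a b p q) := by
  rw [lam_eq_sort_parts, lam_eq_sort_parts, parts_setPair hab, parts_setPair hab]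
  refine Multiset.sort_ge_add_lt_sort_ge_add _ (p := p) (fun z hz => ?_) ?_
  · simp only [Multiset.mem_filter, Multiset.insert_eq_cons, Multiset.mem_cons,
      Multiset.mem_singleton] at hz
    omega
  · exact Multiset.mem_filter.2 ⟨Multiset.mem_cons_self _ _, by omega⟩

end Partitions

section Demazure
variable {σ R : Type*} [CommRing R]

theorem X_mul_monomial_one (a : σ) (e : σ →₀ ℕ) :
    (X a * monomial e 1 : MvPolynomial σ R) = monomial (Finsupp.single a 1 + e) 1 := by
  rw [X, monomial_mul, one_mul]

variable [IsDomain R] [DecidableEq σ]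

def IsDemazure (T : Module.End R (MvPolynomial σ R)) (a b : σ) : Prop :=
  ∀ f, (X a - X b) * T f = X a * f - X b * rename (Equiv.swap a b) f

variable {T : Module.End R (MvPolynomial σ R)} {a b : σ}

theorem demazure_monomial (hT : IsDemazure T a b) (hab : a ≠ b) (d : σ →₀ ℕ) (h : d b ≤ d a) :
    T (monomial d 1) =
      ∑ j ∈ Finset.range (d a - d b + 1), monomial (setPair d a b (d b + j) (d a - j)) 1 := by
  apply mul_left_cancel₀ (sub_ne_zero.2 ((X_injective (R := R)).ne hab))
  -- telescoping sum over the monomials `x_a^(d_b + j) x_b^(d_a + 1 - j)`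
  set f : ℕ → MvPolynomial σ R := fun j => monomial (setPair d a b (d b + j) (d a + 1 - j)) 1
  have hstep : ∀ j ∈ Finset.range (d a - d b + 1),
      (X a - X b) * monomial (setPair d a b (d b + j) (d a - j)) 1 = f (j + 1) - f j := by
    intro j hj
    have hj : j ≤ d a - d b := Nat.lt_succ_iff.1 (Finset.mem_range.1 hj)
    simp only [f]
    rw [sub_mul, X_mul_monomial_one, X_mul_monomial_one, single_left_add_setPair _ _ _ hab,
      single_right_add_setPair _ _ _ hab, show d a + 1 - (j + 1) = d a - j by omega,
      show d a + 1 - j = d a - j + 1 by omega, ← add_assoc]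
  have hlast : f (d a - d b + 1) = X a * monomial d 1 := by
    simp only [f]
    conv_rhs => rw [← setPair_self d (a := a) (b := b)]
    rw [X_mul_monomial_one, single_left_add_setPair _ _ _ hab,
      show d b + (d a - d b + 1) = d a + 1 by omega, show d a + 1 - (d a - d b + 1) = d b by omega]
  have hfirst : f 0 = X b * rename (Equiv.swap a b) (monomial d 1) := by
    simp only [f]
    rw [rename_monomial, mapDomain_swap_eq_setPair d hab, X_mul_monomial_one,
      single_right_add_setPair _ _ _ hab, add_zero, Nat.sub_zero]
  rw [hT, Finset.mul_sum, Finset.sum_congr rfl hstep, Finset.sum_range_sub, hlast, hfirst]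

theorem demazureBar_rename_swap (hT : IsDemazure T a b) (hab : a ≠ b) (f : MvPolynomial σ R) :
    (T - 1) (rename (Equiv.swap a b) f) = -(T - 1) f := by
  have hinv : rename (Equiv.swap a b) (rename (Equiv.swap a b) f) = f := by
    rw [rename_rename, ← Equiv.Perm.coe_mul, Equiv.swap_mul_self, Equiv.Perm.coe_one, rename_id,
      AlgHom.id_apply]
  have hsum : T (rename (Equiv.swap a b) f) + T f = rename (Equiv.swap a b) f + f :=
    mul_left_cancel₀ (sub_ne_zero.2 ((X_injective (R := R)).ne hab)) (by
      rw [mul_add, mul_add, hT, hT, hinv]; ring)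
  simp only [LinearMap.sub_apply, Module.End.one_apply]
  linear_combination hsum

theorem demazureBar_monomial_sub_rename (hT : IsDemazure T a b) (hab : a ≠ b) (d : σ →₀ ℕ)
    (h : d b < d a) :
    (T - 1) (monomial d 1) - monomial (Finsupp.mapDomain (Equiv.swap a b) d) 1 =
      ∑ j ∈ Finset.range (d a - d b - 1),
        monomial (setPair d a b (d b + (j + 1)) (d a - (j + 1))) 1 := by
  rw [LinearMap.sub_apply, Module.End.one_apply, demazure_monomial hT hab d h.le,
    show d a - d b + 1 = d a - d b - 1 + 1 + 1 by omega, Finset.sum_range_succ,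
    Finset.sum_range_succ', show d b + (d a - d b - 1 + 1) = d a by omega,
    show d a - (d a - d b - 1 + 1) = d b by omega, setPair_self, add_zero, Nat.sub_zero,
    mapDomain_swap_eq_setPair d hab]
  ring

end Demazure

section Triangularity
variable {R : Type*} [CommRing R] [IsDomain R] {n : ℕ}
  {T : Module.End R (MvPolynomial (Fin n) R)} {a b : Fin n}

theorem lam_lt_of_mem_support_demazureBar_monomial_sub_rename (hT : IsDemazure T a b)
    (hab : a ≠ b) {d e : Fin n →₀ ℕ} (h : d b < d a)
    (he : e ∈ ((T - 1) (monomial d 1) -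
      monomial (Finsupp.mapDomain (Equiv.swap a b) d) 1).support) :
    lam e < lam d := by
  rw [demazureBar_monomial_sub_rename hT hab d h] at he
  obtain ⟨j, hj, he⟩ := Finset.mem_biUnion.1 (support_sum he)
  rw [Finset.mem_singleton.1 (support_monomial_subset he)]
  conv_rhs => rw [← setPair_self d (a := a) (b := b)]
  exact lam_setPair_lt hab d (by have := Finset.mem_range.1 hj; omega) (by omega) _

theorem lam_le_of_mem_support_demazureBar_monomial (hT : IsDemazure T a b) (hab : a ≠ b)
    (d : Fin n →₀ ℕ) {e : Fin n →₀ ℕ} (he : e ∈ ((T - 1) (monomial d 1)).support) :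
    lam e ≤ lam d := by
  have of_lt : ∀ d : Fin n →₀ ℕ, d b < d a → ∀ e ∈ ((T - 1) (monomial d 1)).support,
      lam e ≤ lam d := by
    intro d h e he
    rw [← sub_add_cancel ((T - 1) (monomial d 1))
      (monomial (Finsupp.mapDomain (Equiv.swap a b) d) 1)] at he
    rcases Finset.mem_union.1 (support_add he) with he | he
    · exact (lam_lt_of_mem_support_demazureBar_monomial_sub_rename hT hab h he).le
    · rw [Finset.mem_singleton.1 (support_monomial_subset he), lam_mapDomain_equiv]
  rcases lt_trichotomy (d b) (d a) with h | h | h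
  · exact of_lt d h e he
  · have hfix : (T - 1) (monomial d 1) = 0 := by
      have hself : setPair d a b (d a + 0) (d a - 0) = d := by
        rw [add_zero, Nat.sub_zero]
        calc setPair d a b (d a) (d a) = setPair d a b (d a) (d b) := by rw [h]
          _ = d := setPair_self d
      rw [LinearMap.sub_apply, Module.End.one_apply, demazure_monomial hT hab d h.le, h,
        Nat.sub_self, zero_add, Finset.sum_range_one, hself, sub_self]
    rw [hfix, support_zero] at he
    exact absurd he (Finset.notMem_empty e)
  · have hd : rename (Equiv.swap a b) (monomial (Finsupp.mapDomain (Equiv.swap a b) d) 1) =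
        (monomial d 1 : MvPolynomial (Fin n) R) := by
      rw [rename_monomial, ← Finsupp.mapDomain_comp, ← Equiv.Perm.coe_mul, Equiv.swap_mul_self,
        Equiv.Perm.coe_one, Finsupp.mapDomain_id]
    rw [← hd, demazureBar_rename_swap hT hab, support_neg] at he
    rw [← lam_mapDomain_equiv (Equiv.swap a b) d]
    refine of_lt _ ?_ e he
    simpa only [Finsupp.mapDomain_equiv_apply, Equiv.symm_swap, Equiv.swap_apply_left,
      Equiv.swap_apply_right] using h

theorem lam_lt_of_mem_support_demazureBar (hT : IsDemazure T a b) (hab : a ≠ b)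
    {f : MvPolynomial (Fin n) R} {L : List ℕ} (hf : ∀ e ∈ f.support, lam e < L)
    {e : Fin n →₀ ℕ} (he : e ∈ ((T - 1) f).support) : lam e < L := by
  rw [f.as_sum, map_sum] at he
  obtain ⟨v, hv, he⟩ := Finset.mem_biUnion.1 (support_sum he)
  rw [← mul_one (coeff v f), ← smul_eq_mul, ← smul_monomial, map_smul] at he
  exact (lam_le_of_mem_support_demazureBar_monomial hT hab v (support_smul he)).trans_lt (hf v hv)

end Triangularity

section ReducedWords
variable {R : Type*} [CommRing R] [IsDomain R] {n : ℕ}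

theorem lam_lt_of_mem_support_demazureBar_reducedWord_sub
    (dem : ℕ → Module.End R (MvPolynomial (Fin n) R))
    (hdem : ∀ i (hi : 1 ≤ i) (hin : i < n), IsDemazure (dem i) ⟨i - 1, by omega⟩ ⟨i, hin⟩)
    (d : Fin n →₀ ℕ) (r : List ℕ) (hr : ∀ i ∈ r, 1 ≤ i ∧ i < n)
    (hred : r.length = invNum (r.map (sswap n)).prod)
    (hd : ∀ p ∈ inversions (r.map (sswap n)).prod, d p.2 < d p.1) :
    ∀ e ∈ ((r.map fun i => dem i - 1).prod (monomial d 1) -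
      monomial (Finsupp.mapDomain (r.map (sswap n)).prod d) 1).support, lam e < lam d := by
  induction r with
  | nil =>
    intro e he
    simp only [List.map_nil, List.prod_nil, Module.End.one_apply, Equiv.Perm.coe_one,
      Finsupp.mapDomain_id, sub_self, support_zero] at he
    exact absurd he (Finset.notMem_empty e)
  | cons i r ih =>
    obtain ⟨hi, hin⟩ := hr i List.mem_cons_self
    simp only [List.map_cons, List.prod_cons, List.length_cons, sswap_eq_swap hi hin] at hred hd ⊢
    set a : Fin n := ⟨i - 1, by omega⟩
    set b : Fin n := ⟨i, hin⟩
    have hab : a ⋖ b := mk_sub_one_covBy_mk hi hin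
    set u := (r.map (sswap n)).prod
    have hlen : invNum u ≤ r.length := invNum_prod_le_length r
    have hstep : invNum (Equiv.swap a b * u) = invNum u + 1 := by
      have := card_inversions_swap_mul_le hab u
      simp only [invNum_eq_card_inversions] at hred hlen ⊢
      omega
    obtain ⟨hlt, hsub⟩ := lt_and_inversions_subset_of_card_inversions_swap_mul hab u hstep
    have IH := ih (fun j hj => hr j (List.mem_cons_of_mem i hj)) (by omega)
      (fun p hp => hd p (hsub hp))
    set d' := Finsupp.mapDomain u d
    have hd' : d' b < d' a := by
      simp only [d', Finsupp.mapDomain_equiv_apply]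
      refine hd (u.symm a, u.symm b) (mem_inversions.2 ⟨hlt, ?_⟩)
      simpa using hab.lt
    have hsplit : ((dem i - 1) * (r.map fun i => dem i - 1).prod) (monomial d 1) -
        monomial (Finsupp.mapDomain (Equiv.swap a b * u) d) 1 =
        (dem i - 1) ((r.map fun i => dem i - 1).prod (monomial d 1) - monomial d' 1) +
          ((dem i - 1) (monomial d' 1) - monomial (Finsupp.mapDomain (Equiv.swap a b) d') 1) := by
      rw [map_sub, Module.End.mul_apply, Equiv.Perm.coe_mul, Finsupp.mapDomain_comp]
      abel
    intro e he
    rw [hsplit] at he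
    rcases Finset.mem_union.1 (support_add he) with he | he
    · exact lam_lt_of_mem_support_demazureBar (hdem i hi hin) hab.lt.ne IH he
    · rw [← lam_mapDomain_equiv u d]
      exact lam_lt_of_mem_support_demazureBar_monomial_sub_rename (hdem i hi hin) hab.lt.ne hd' he

end ReducedWords

section FlagMonomial

noncomputable def eC (n : ℕ) (C : Finset ℕ) : Fin n →₀ ℕ :=
  Finsupp.equivFunOnFinite.symm fun t => (C.filter fun c => (t : ℕ) < c).card

theorem xC_eq_monomial (F : Type*) [Field F] (n : ℕ) (C : Finset ℕ) :
    xC F n C = monomial (eC n C) 1 := by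
  set E : ℕ → Fin n →₀ ℕ := fun j => if h : j < n then Finsupp.single ⟨j, h⟩ 1 else 0
  have hfactor : ∀ j, (if h : j < n then X (⟨j, h⟩ : Fin n) else 1 : MvPolynomial (Fin n) F) =
      monomial (E j) 1 := by
    intro j
    simp only [E]
    split_ifs <;> rfl
  have hE : ∀ (t : Fin n) j, E j t = if j = t then 1 else 0 := by
    intro t j
    by_cases hj : j < n
    · simp only [E, dif_pos hj, Finsupp.single_apply, Fin.ext_iff]
    · have : j ≠ t := fun h => hj (h ▸ t.isLt)
      simp only [E, dif_neg hj, Finsupp.coe_zero, Pi.zero_apply, if_neg this]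
  suffices hsum : ∑ i ∈ C, ∑ j ∈ Finset.range i, E j = eC n C by
    simp_rw [xC, hfactor, ← monomial_sum_one, hsum]
  ext t
  simp [Finsupp.finsetSum_apply, hE, eC]

end FlagMonomial

section Descents

theorem exists_descent_of_lt {α : Type*} [LinearOrder α] (f : ℕ → α) {z t : ℕ} (hzt : z ≤ t)
    (h : f t < f z) : ∃ m, z ≤ m ∧ m < t ∧ f (m + 1) < f m := by
  by_contra! hmono
  have hle : ∀ k, k ≤ t - z → f z ≤ f (z + k) := by
    intro k
    induction k with
    | zero => simp
    | succ k ih => exact fun hk => (ih (by omega)).trans (hmono (z + k) (by omega) (by omega))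
  exact (Nat.add_sub_cancel' hzt ▸ hle (t - z) le_rfl).not_gt h

variable {n : ℕ}

theorem valAt_succ (w : Equiv.Perm (Fin n)) (m : Fin n) : valAt n w (m + 1) = w m := by
  simp [valAt]

theorem exists_mem_permDes_of_mem_inversions {w : Equiv.Perm (Fin n)} {p : Fin n × Fin n}
    (hp : p ∈ inversions w) : ∃ m, (p.1 : ℕ) ≤ m ∧ m < p.2 ∧ m + 1 ∈ permDes n w := by
  obtain ⟨hlt, hw⟩ := mem_inversions.1 hp
  obtain ⟨m, hzm, hmt, hm⟩ := exists_descent_of_lt (fun m => valAt n w (m + 1)) hlt.le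
    (by simpa only [valAt_succ] using Fin.lt_def.1 hw)
  exact ⟨m, hzm, hmt, Finset.mem_filter.2 ⟨Finset.mem_Icc.2 ⟨by omega, by omega⟩, hm⟩⟩

theorem eC_lt_of_mem_inversions {C : Finset ℕ} {w : Equiv.Perm (Fin n)} (hw : permDes n w ⊆ C)
    {p : Fin n × Fin n} (hp : p ∈ inversions w) : eC n C p.2 < eC n C p.1 := by
  obtain ⟨m, hzm, hmt, hm⟩ := exists_mem_permDes_of_mem_inversions hp
  refine Finset.card_lt_card ⟨Finset.monotone_filter_right _ fun c hc => by omega, fun hsub => ?_⟩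
  have := (Finset.mem_filter.1 (hsub (Finset.mem_filter.2 ⟨hw hm, by omega⟩))).2
  omega

end Descents

/-- triangularity of `π̄_c` acting on `x_C`.  If `Des(w) ⊆ C` and
`(i₁,…,i_k)` is a reduced word for `w`, then `π̄_{(i₁,…,i_k)}(x_C) − w·x_C` is a linear
combination of monomials `x^d` with `λ(d) <_lex λ(e_C)`, where `e_C` is the exponent
vector of `x_C`. -/
theorem stmt9 (F : Type*) [Field F] (n : ℕ)
    (C : Finset ℕ)
    -- the Demazure operators, characterized by their defining property
    (dem : ℕ → Module.End F (MvPolynomial (Fin n) F))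
    (hdem : ∀ i, 1 ≤ i → ∀ hin : i < n, ∀ f,
      (X (⟨i - 1, by omega⟩ : Fin n) - X (⟨i, hin⟩ : Fin n)) * dem i f =
        X (⟨i - 1, by omega⟩ : Fin n) * f -
          X (⟨i, hin⟩ : Fin n) * (rename (⇑(sswap n i)) f))
    (w : Equiv.Perm (Fin n)) (hw : permDes n w ⊆ C)
    (rword : List ℕ) (hr1 : ∀ i ∈ rword, 1 ≤ i ∧ i < n)
    (hr2 : (rword.map (sswap n)).prod = w) (hr3 : rword.length = invNum w) :
    ∀ d ∈ ((rword.map (fun i => dem i - 1)).prod (xC F n C) -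
        rename (⇑w) (xC F n C)).support,
      ∀ e ∈ (xC F n C).support, List.Lex (· < ·) (lam d) (lam e) := by
  have hdem' : ∀ i (hi : 1 ≤ i) (hin : i < n), IsDemazure (dem i) ⟨i - 1, by omega⟩ ⟨i, hin⟩ :=
    fun i hi hin f => by rw [← sswap_eq_swap hi hin]; exact hdem i hi hin f
  intro d hd e he
  rw [xC_eq_monomial] at hd he
  rw [Finset.mem_singleton.1 (support_monomial_subset he)]
  rw [rename_monomial] at hd
  subst hr2
  exact lam_lt_of_mem_support_demazureBar_reducedWord_sub dem hdem' _ rword hr1 hr3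
    (fun p hp => eC_lt_of_mem_inversions hw hp) d hd
end
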